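/- Let V be the free R-module on ℕ with basis (e_n), U(e_n) = e_{n+1}, D(e_0) = 0, D(e_{n+1}) = e_n. For every R-linear endomorphism φ of V there exists a sequence of polynomials (P_n) in R[x] such that for every m ∈ ℕ, φ(e_m) = Σ_{k=0}^{m} P_k(U)(D^k(e_m)), i.e. φ is the pointwise sum of the summable family (P_n(U) ∘ D^n). -/

import Mathlib

noncomputable def e (R : Type*) [CommRing R] (n : ℕ) : ℕ →₀ R := Finsupp.single n 1

noncomputable def U (R : Type*) [CommRing R] : Module.End R (ℕ →₀ R) :=
  Finsupp.lmapDomain R R (· + 1)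

noncomputable def D (R : Type*) [CommRing R] : Module.End R (ℕ →₀ R) :=
  Finsupp.lsum ℕ fun n => match n with
    | 0 => 0
    | m + 1 => Finsupp.lsingle m

/-!
Identifying `ℕ →₀ R` with `R[X]`, the shift `U` is multiplication by `X` and `e 0 = 1`, so every
vector is `Q(U)(e 0)` for a polynomial `Q`. Since `Dᵐ(e m) = e 0`, the polynomials can be chosen
one at a time: `P m` is the polynomial whose value at `U` on `e 0` is what `φ (e m)` still lacks
after the terms `k < m`.
-/

open Polynomial

section

variable {R : Type*} [CommRing R]

lemma U_apply_e (n : ℕ) : U R (e R n) = e R (n + 1) := by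
  simp [U, e, Finsupp.mapDomain_single]

lemma U_pow_apply_e_zero (n : ℕ) : (U R ^ n) (e R 0) = e R n := by
  induction n with
  | zero => rfl
  | succ n ih => rw [pow_succ', Module.End.mul_apply, ih, U_apply_e]

lemma D_apply_e_succ (n : ℕ) : D R (e R (n + 1)) = e R n := by
  simp [D, e, Finsupp.sum_single_index]

lemma D_pow_apply_e_self (n : ℕ) : (D R ^ n) (e R n) = e R 0 := by
  induction n with
  | zero => rfl
  | succ n ih => rw [pow_succ, Module.End.mul_apply, D_apply_e_succ, ih]

lemma aeval_U_apply_e_zero (p : R[X]) : aeval (U R) p (e R 0) = p.toFinsupp.coeff := by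
  induction p using Polynomial.induction_on' with
  | add p q hp hq =>
    rw [map_add, LinearMap.add_apply, hp, hq, toFinsupp_add, AddMonoidAlgebra.coeff_add]
  | monomial n a =>
    rw [aeval_monomial, Module.End.mul_apply, U_pow_apply_e_zero, Module.algebraMap_end_apply,
      toFinsupp_monomial, AddMonoidAlgebra.coeff_single, e, Finsupp.smul_single_one]

noncomputable def decompPoly (φ : Module.End R (ℕ →₀ R)) (m : ℕ) : R[X] :=
  ofFinsupp <| .ofCoeff <|
    φ (e R m) - ∑ k : Fin m, aeval (U R) (decompPoly φ k) ((D R ^ (k : ℕ)) (e R m))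

end

/-- Every linear endomorphism `φ` of `V` decomposes as a pointwise sum
`φ = Σ_n P_n(U) ∘ Dⁿ` for some sequence of polynomials `(P_n)`. -/
theorem endo_decomposition_exists (R : Type*) [CommRing R]
    (φ : Module.End R (ℕ →₀ R)) :
    ∃ P : ℕ → Polynomial R, ∀ m : ℕ,
      φ (e R m) = ∑ k ∈ Finset.range (m + 1),
        (Polynomial.aeval (U R) (P k)) ((D R ^ k) (e R m)) := by
  refine ⟨decompPoly φ, fun m => ?_⟩
  rw [Finset.sum_range_succ, D_pow_apply_e_self, aeval_U_apply_e_zero, decompPoly,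
    AddMonoidAlgebra.coeff_ofCoeff,
    Fin.sum_univ_eq_sum_range (fun k => aeval (U R) (decompPoly φ k) ((D R ^ k) (e R m))),
    add_sub_cancel]
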